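/- Let P be a row-stochastic N×N real matrix with τ₁(P) < 1 and stationary distribution w, let r ∈ ℝᴺ be a (reward) vector, and let ϖ be any probability row vector. Then the average reward limit exists and is independent of the initial distribution: lim_{n→∞} (1/n) Σ_{t=1}^{n} ϖᵀ Pᵗ r = wᵀ r. -/

import Mathlib

/-!
Dobrushin's contraction: if `∑ k, d k = 0` then `|d ⬝ᵥ g| ≤ (∑ k, |d k|) / 2 · osc g`, where
`osc g = max g - min g`. Applied to `d = P i - P j` this gives `osc (P g) ≤ τ₁(P) · osc g`, so
`osc (Pᵗ r) ≤ τ₁(P)ᵗ · osc r → 0`. Applied to `d = ϖ - w`, using `wᵀ Pᵗ = wᵀ`, it gives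
`|ϖᵀ Pᵗ r - wᵀ r| ≤ C · osc (Pᵗ r) → 0`, and the Cesàro means of a convergent sequence converge
to the same limit.
-/

open Filter

/-- Coefficient of ergodicity τ₁ of a row-stochastic matrix. -/
noncomputable def tau1 {N : ℕ} (P : Matrix (Fin N) (Fin N) ℝ) : ℝ :=
  (1 / 2) * ⨆ i, ⨆ j, ∑ k, |P i k - P j k|

open Topology Matrix Finset

theorem Filter.Tendsto.cesaro_Icc {u : ℕ → ℝ} {l : ℝ} (hu : Tendsto u atTop (𝓝 l)) :
    Tendsto (fun n : ℕ => 1 / (n : ℝ) * ∑ t ∈ Icc 1 n, u t) atTop (𝓝 l) := by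
  convert (hu.comp (tendsto_add_atTop_nat 1)).cesaro using 2 with n
  rw [one_div, range_eq_Ico, Function.comp_def, sum_Ico_add' u, zero_add,
    Ico_add_one_right_eq_Icc]

noncomputable def vecOsc {ι : Type*} (g : ι → ℝ) : ℝ :=
  (⨆ i, g i) - ⨅ i, g i

section Oscillation

variable {ι : Type*} [Fintype ι]

theorem abs_sub_midpoint_le_vecOsc (g : ι → ℝ) (k : ι) :
    |g k - ((⨆ i, g i) + ⨅ i, g i) / 2| ≤ vecOsc g / 2 := by
  have hsup := Finite.le_ciSup g k
  have hinf := Finite.ciInf_le g k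
  rw [vecOsc, abs_le]
  constructor <;> linarith

theorem vecOsc_nonneg [Nonempty ι] (g : ι → ℝ) : 0 ≤ vecOsc g :=
  sub_nonneg.2 <| ciInf_le_ciSup (Finite.bddBelow_range g) (Finite.bddAbove_range g)

theorem vecOsc_le_of_forall_sub_le [Nonempty ι] {g : ι → ℝ} {c : ℝ}
    (h : ∀ i j, g i - g j ≤ c) : vecOsc g ≤ c := by
  obtain ⟨i, hi⟩ := exists_eq_ciSup_of_finite (f := g)
  obtain ⟨j, hj⟩ := exists_eq_ciInf_of_finite (f := g)
  rw [vecOsc, ← hi, ← hj]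
  exact h i j

/-- Shifting `g` by the midpoint of its range is free because `∑ d = 0`. -/
theorem abs_dotProduct_le_of_sum_eq_zero {d : ι → ℝ} (hd : ∑ k, d k = 0) (g : ι → ℝ) :
    |d ⬝ᵥ g| ≤ (∑ k, |d k|) / 2 * vecOsc g := by
  set c := ((⨆ i, g i) + ⨅ i, g i) / 2
  have hshift : d ⬝ᵥ g = ∑ k, d k * (g k - c) := by
    simp only [dotProduct, mul_sub, sum_sub_distrib, ← sum_mul, hd, zero_mul, sub_zero]
  calc |d ⬝ᵥ g| ≤ ∑ k, |d k| * |g k - c| := by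
        rw [hshift]
        exact (abs_sum_le_sum_abs _ _).trans_eq (by simp only [abs_mul])
    _ ≤ ∑ k, |d k| * (vecOsc g / 2) := by
        gcongr with k
        exact abs_sub_midpoint_le_vecOsc g k
    _ = (∑ k, |d k|) / 2 * vecOsc g := by rw [← sum_mul]; ring

end Oscillation

section Ergodicity

variable {N : ℕ}

theorem sum_abs_sub_le_two_mul_tau1 (P : Matrix (Fin N) (Fin N) ℝ) (i j : Fin N) :
    ∑ k, |P i k - P j k| ≤ 2 * tau1 P := by
  have hj := Finite.le_ciSup (fun j => ∑ k, |P i k - P j k|) j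
  have hi := Finite.le_ciSup (fun i => ⨆ j, ∑ k, |P i k - P j k|) i
  rw [tau1]
  linarith

theorem tau1_nonneg (P : Matrix (Fin N) (Fin N) ℝ) : 0 ≤ tau1 P :=
  mul_nonneg (by norm_num) <| Real.iSup_nonneg fun _ => Real.iSup_nonneg fun _ =>
    sum_nonneg fun _ _ => abs_nonneg _

variable [Nonempty (Fin N)] {P : Matrix (Fin N) (Fin N) ℝ}

theorem vecOsc_mulVec_le (hP : ∀ i, ∑ j, P i j = 1) (g : Fin N → ℝ) :
    vecOsc (P *ᵥ g) ≤ tau1 P * vecOsc g := by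
  refine vecOsc_le_of_forall_sub_le fun i j => ?_
  have hsum : ∑ k, (P i - P j) k = 0 := by simp [sum_sub_distrib, hP]
  calc (P *ᵥ g) i - (P *ᵥ g) j = (P i - P j) ⬝ᵥ g := (sub_dotProduct _ _ _).symm
    _ ≤ (∑ k, |P i k - P j k|) / 2 * vecOsc g :=
        (le_abs_self _).trans (abs_dotProduct_le_of_sum_eq_zero hsum g)
    _ ≤ tau1 P * vecOsc g := by
        have hrow := sum_abs_sub_le_two_mul_tau1 P i j
        have hosc := vecOsc_nonneg g
        gcongr
        linarith

theorem vecOsc_pow_mulVec_le (hP : ∀ i, ∑ j, P i j = 1) (g : Fin N → ℝ) (t : ℕ) :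
    vecOsc (P ^ t *ᵥ g) ≤ tau1 P ^ t * vecOsc g := by
  induction t with
  | zero => simp
  | succ t ih =>
    rw [pow_succ', ← mulVec_mulVec, pow_succ', mul_assoc]
    exact (vecOsc_mulVec_le hP _).trans (mul_le_mul_of_nonneg_left ih (tau1_nonneg P))

end Ergodicity

theorem Matrix.vecMul_pow_of_vecMul_eq {n R : Type*} [Fintype n] [DecidableEq n] [Semiring R]
    {P : Matrix n n R} {w : n → R} (hw : w ᵥ* P = w) (t : ℕ) : w ᵥ* P ^ t = w := by
  induction t with
  | zero => simp
  | succ t ih => rw [pow_succ, ← vecMul_vecMul, ih, hw]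

theorem tendsto_dotProduct_pow_mulVec {N : ℕ} [Nonempty (Fin N)] {P : Matrix (Fin N) (Fin N) ℝ}
    (hP : ∀ i, ∑ j, P i j = 1) (htau : tau1 P < 1) {w ϖ : Fin N → ℝ} (hw : w ᵥ* P = w)
    (hsum : ∑ i, ϖ i = ∑ i, w i) (r : Fin N → ℝ) :
    Tendsto (fun t => ϖ ⬝ᵥ (P ^ t *ᵥ r)) atTop (𝓝 (w ⬝ᵥ r)) := by
  have hd : ∑ k, (ϖ - w) k = 0 := by simp [sum_sub_distrib, hsum]
  have hbound : ∀ t : ℕ, |ϖ ⬝ᵥ (P ^ t *ᵥ r) - w ⬝ᵥ r|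
      ≤ (∑ k, |(ϖ - w) k|) / 2 * vecOsc r * tau1 P ^ t := by
    intro t
    have hstat : w ⬝ᵥ (P ^ t *ᵥ r) = w ⬝ᵥ r := by
      rw [dotProduct_mulVec, vecMul_pow_of_vecMul_eq hw]
    rw [← hstat, ← sub_dotProduct]
    refine (abs_dotProduct_le_of_sum_eq_zero hd _).trans ?_
    rw [mul_assoc, mul_comm (vecOsc r)]
    exact mul_le_mul_of_nonneg_left (vecOsc_pow_mulVec_le hP r t)
      (div_nonneg (sum_nonneg fun _ _ => abs_nonneg _) zero_le_two)
  have hgeom := (tendsto_pow_atTop_nhds_zero_of_lt_one (tau1_nonneg P) htau).const_mul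
    ((∑ k, |(ϖ - w) k|) / 2 * vecOsc r)
  rw [mul_zero] at hgeom
  exact tendsto_iff_norm_sub_tendsto_zero.2 (squeeze_zero (fun _ => norm_nonneg _) hbound hgeom)

theorem average_reward_limit_general {N : ℕ}
    (P : Matrix (Fin N) (Fin N) ℝ)
    (hProw : ∀ i, ∑ j, P i j = 1)
    (htau : tau1 P < 1)
    (w : Fin N → ℝ) (hwsum : ∑ i, w i = 1)
    (hwstat : ∀ j, ∑ i, w i * P i j = w j)
    (r : Fin N → ℝ)
    (ϖ : Fin N → ℝ) (hϖsum : ∑ i, ϖ i = 1) :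
    Tendsto (fun n : ℕ =>
        (1 / (n : ℝ)) * ∑ t ∈ Finset.Icc 1 n, ∑ i, ∑ j, ϖ i * (P ^ t) i j * r j)
      atTop (nhds (∑ j, w j * r j)) := by
  have : Nonempty (Fin N) := by
    obtain ⟨i, -, -⟩ := exists_ne_zero_of_sum_ne_zero (hwsum ▸ one_ne_zero)
    exact ⟨i⟩
  have hreward (t : ℕ) : ∑ i, ∑ j, ϖ i * (P ^ t) i j * r j = ϖ ⬝ᵥ (P ^ t *ᵥ r) := by
    simp only [dotProduct, mulVec, mul_sum, mul_assoc]
  simp only [hreward]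
  exact (tendsto_dotProduct_pow_mulVec hProw htau (funext hwstat) (hϖsum.trans hwsum.symm)
    r).cesaro_Icc

/-- For a row-stochastic `P` with `τ₁(P) < 1` and stationary distribution `w`,
the average reward limit exists and equals `wᵀr` for any initial distribution. -/
theorem average_reward_limit {N : ℕ} [NeZero N]
    (P : Matrix (Fin N) (Fin N) ℝ)
    (hPnn : ∀ i j, 0 ≤ P i j) (hProw : ∀ i, ∑ j, P i j = 1)
    (htau : tau1 P < 1)
    (w : Fin N → ℝ) (hwnn : ∀ i, 0 ≤ w i) (hwsum : ∑ i, w i = 1)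
    (hwstat : ∀ j, ∑ i, w i * P i j = w j)
    (r : Fin N → ℝ)
    (ϖ : Fin N → ℝ) (hϖnn : ∀ i, 0 ≤ ϖ i) (hϖsum : ∑ i, ϖ i = 1) :
    Tendsto (fun n : ℕ =>
        (1 / (n : ℝ)) * ∑ t ∈ Finset.Icc 1 n, ∑ i, ∑ j, ϖ i * (P ^ t) i j * r j)
      atTop (nhds (∑ j, w j * r j)) :=
  average_reward_limit_general P hProw htau w hwsum hwstat r ϖ hϖsum
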